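/- Let k be a field and H a k-Hopf algebra with comultiplication Δ(h) = Σ h₍₁₎⊗h₍₂₎. Then the canonical Hopf–Galois map β : H⊗H → H⊗H defined by β(g⊗h) = Σ g h₍₁₎ ⊗ h₍₂₎ is a solution of the Hopf equation (β¹²β²³ = β²³β¹³β¹²). -/

import Mathlib

open TensorProduct LinearMap

section HopfEq

variable (k V : Type*) [Field k] [AddCommGroup V] [Module k V]

/-- The flip map `τ : V ⊗ V → V ⊗ V`, `τ(v ⊗ w) = w ⊗ v`. -/
noncomputable def flipMap : V ⊗[k] V →ₗ[k] V ⊗[k] V :=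
  (TensorProduct.comm k V V).toLinearMap

variable {k V}

/-- `R¹² = R ⊗ I` as an endomorphism of `V ⊗ V ⊗ V`. -/
noncomputable def map12 (R : V ⊗[k] V →ₗ[k] V ⊗[k] V) :
    V ⊗[k] (V ⊗[k] V) →ₗ[k] V ⊗[k] (V ⊗[k] V) :=
  (TensorProduct.assoc k V V V).toLinearMap ∘ₗ R.rTensor V ∘ₗ
    (TensorProduct.assoc k V V V).symm.toLinearMap

/-- `R²³ = I ⊗ R` as an endomorphism of `V ⊗ V ⊗ V`. -/
noncomputable def map23 (R : V ⊗[k] V →ₗ[k] V ⊗[k] V) :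
    V ⊗[k] (V ⊗[k] V) →ₗ[k] V ⊗[k] (V ⊗[k] V) :=
  R.lTensor V

/-- `R¹³ = (I ⊗ τ)(R ⊗ I)(I ⊗ τ)` as an endomorphism of `V ⊗ V ⊗ V`. -/
noncomputable def map13 (R : V ⊗[k] V →ₗ[k] V ⊗[k] V) :
    V ⊗[k] (V ⊗[k] V) →ₗ[k] V ⊗[k] (V ⊗[k] V) :=
  (flipMap k V).lTensor V ∘ₗ map12 R ∘ₗ (flipMap k V).lTensor V

/-- `R` is a solution of the Hopf equation: `R¹²R²³ = R²³R¹³R¹²`. -/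
def IsHopfSolution (R : V ⊗[k] V →ₗ[k] V ⊗[k] V) : Prop :=
  map12 R ∘ₗ map23 R = map23 R ∘ₗ map13 R ∘ₗ map12 R

/-- `R` is a solution of the pentagonal equation: `R¹²R¹³R²³ = R²³R¹²`. -/
def IsPentagonSolution (R : V ⊗[k] V →ₗ[k] V ⊗[k] V) : Prop :=
  map12 R ∘ₗ map13 R ∘ₗ map23 R = map23 R ∘ₗ map12 R

end HopfEq

variable (k H : Type*) [Field k] [Ring H] [HopfAlgebra k H]

/-- The canonical Hopf–Galois map `β : H ⊗ H → H ⊗ H`, `β(g ⊗ h) = Σ g h₍₁₎ ⊗ h₍₂₎`. -/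
noncomputable def galoisMap : H ⊗[k] H →ₗ[k] H ⊗[k] H :=
  LinearMap.rTensor H (LinearMap.mul' k H) ∘ₗ
    (TensorProduct.assoc k H H H).symm.toLinearMap ∘ₗ
    LinearMap.lTensor H (Coalgebra.comul (R := k))

/-! Writing `β (g ⊗ h) = (g ⊗ 1) Δ(h)` in the algebra `H ⊗ H`, both sides of the Hopf equation
send `x ⊗ y ⊗ z` to `(x ⊗ 1 ⊗ 1) (Δ(y) ⊗ 1) (id ⊗ Δ)(Δ(z))`. For `β¹²β²³` this is because
`β¹²(x ⊗ t) = (x ⊗ 1 ⊗ 1) (Δ ⊗ id)(t)` with `Δ ⊗ id` multiplicative, followed by coassociativity;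
for `β²³β¹³β¹²` it is a direct computation on `β¹²(x ⊗ y ⊗ z) = Σ x y₍₁₎ ⊗ y₍₂₎ ⊗ z`. -/

open Coalgebra

section TensorAlgebra

variable {R A : Type*} [CommSemiring R] [Semiring A] [Algebra R A]

lemma rTensor_mul'_assoc_symm_tmul (g : A) (t : A ⊗[R] A) :
    (mul' R A).rTensor A ((TensorProduct.assoc R A A A).symm (g ⊗ₜ t)) = (g ⊗ₜ 1) * t := by
  induction t using TensorProduct.induction_on with
  | zero => simp
  | tmul a b => simp
  | add s t hs ht => simp only [tmul_add, map_add, mul_add, hs, ht]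

lemma assoc_tmul_one_mul_tmul {B C : Type*} [Semiring B] [Algebra R B] [Semiring C]
    [Algebra R C] (x : A) (w : A ⊗[R] B) (c : C) :
    TensorProduct.assoc R A B C (((x ⊗ₜ 1) * w) ⊗ₜ c) =
      (x ⊗ₜ 1) * TensorProduct.assoc R A B C (w ⊗ₜ c) := by
  have h := map_mul (Algebra.TensorProduct.assoc R R R A B C) ((x ⊗ₜ 1) ⊗ₜ 1) (w ⊗ₜ c)
  rwa [Algebra.TensorProduct.tmul_mul_tmul, one_mul] at h

end TensorAlgebra

section Bialgebra

variable {R A : Type*} [CommSemiring R] [Semiring A] [Bialgebra R A]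

variable (R A) in
noncomputable def comulRTensorAlgHom : A ⊗[R] A →ₐ[R] A ⊗[R] (A ⊗[R] A) :=
  (Algebra.TensorProduct.assoc R R R A A A).toAlgHom.comp
    (Algebra.TensorProduct.map (Bialgebra.comulAlgHom R A) (AlgHom.id R A))

lemma comulRTensorAlgHom_apply (t : A ⊗[R] A) :
    comulRTensorAlgHom R A t = TensorProduct.assoc R A A A (comul.rTensor A t) := by
  induction t using TensorProduct.induction_on with
  | zero => simp
  | tmul a b => rfl
  | add s t hs ht => simp only [map_add, hs, ht]

lemma comulRTensorAlgHom_comul (a : A) :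
    comulRTensorAlgHom R A (comul a) = comul.lTensor A (comul a) := by
  rw [comulRTensorAlgHom_apply, coassoc_apply]

end Bialgebra

lemma map12_tmul {K V : Type*} [Field K] [AddCommGroup V] [Module K V]
    (R : V ⊗[K] V →ₗ[K] V ⊗[K] V) (x y z : V) :
    map12 R (x ⊗ₜ (y ⊗ₜ z)) = TensorProduct.assoc K V V V (R (x ⊗ₜ y) ⊗ₜ z) := rfl

section GaloisMap

variable {k H}

lemma galoisMap_tmul (g h : H) : galoisMap k H (g ⊗ₜ h) = (g ⊗ₜ 1) * comul h :=
  rTensor_mul'_assoc_symm_tmul g (comul h)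

lemma map12_galoisMap_tmul (x : H) (t : H ⊗[k] H) :
    map12 (galoisMap k H) (x ⊗ₜ t) = (x ⊗ₜ 1) * comulRTensorAlgHom k H t := by
  induction t using TensorProduct.induction_on with
  | zero => simp
  | tmul y z =>
    rw [map12_tmul, galoisMap_tmul, assoc_tmul_one_mul_tmul, comulRTensorAlgHom_apply,
      rTensor_tmul]
  | add s t hs ht => simp only [tmul_add, map_add, mul_add, hs, ht]

lemma map23_map13_galoisMap_tmul (a b c : H) :
    map23 (galoisMap k H) (map13 (galoisMap k H) (a ⊗ₜ (b ⊗ₜ c))) =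
      (a ⊗ₜ (b ⊗ₜ 1)) * comul.lTensor H (comul c) := by
  have key : ∀ t : H ⊗[k] H, map23 (galoisMap k H) ((flipMap k H).lTensor H
      (TensorProduct.assoc k H H H (((a ⊗ₜ 1) * t) ⊗ₜ b))) =
      (a ⊗ₜ (b ⊗ₜ 1)) * comul.lTensor H t := by
    intro t
    induction t using TensorProduct.induction_on with
    | zero => simp
    | tmul p q => simp [map23, flipMap, galoisMap_tmul]
    | add s t hs ht => simp only [mul_add, add_tmul, map_add, hs, ht]
  rw [← key, ← galoisMap_tmul]
  rfl

lemma map23_map13_galoisMap_assoc_tmul (w : H ⊗[k] H) (c : H) :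
    map23 (galoisMap k H) (map13 (galoisMap k H) (TensorProduct.assoc k H H H (w ⊗ₜ c))) =
      TensorProduct.assoc k H H H (w ⊗ₜ 1) * comul.lTensor H (comul c) := by
  induction w using TensorProduct.induction_on with
  | zero => simp
  | tmul a b => exact map23_map13_galoisMap_tmul a b c
  | add s t hs ht => simp only [add_tmul, map_add, add_mul, hs, ht]

end GaloisMap

theorem galoisMap_isHopfSolution : IsHopfSolution (galoisMap k H) := by
  refine TensorProduct.ext_threefold' fun x y z => ?_
  have lhs : map12 (galoisMap k H) (map23 (galoisMap k H) (x ⊗ₜ (y ⊗ₜ z))) =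
      (x ⊗ₜ 1) * (TensorProduct.assoc k H H H (comul y ⊗ₜ 1) * comul.lTensor H (comul z)) := by
    rw [map23, lTensor_tmul, galoisMap_tmul, map12_galoisMap_tmul, map_mul,
      comulRTensorAlgHom_comul, comulRTensorAlgHom_apply, rTensor_tmul]
  have rhs : map23 (galoisMap k H) (map13 (galoisMap k H) (map12 (galoisMap k H)
      (x ⊗ₜ (y ⊗ₜ z)))) =
      (x ⊗ₜ 1) * TensorProduct.assoc k H H H (comul y ⊗ₜ 1) * comul.lTensor H (comul z) := by
    rw [map12_tmul, map23_map13_galoisMap_assoc_tmul, galoisMap_tmul, assoc_tmul_one_mul_tmul]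
  simp only [LinearMap.comp_apply, lhs, rhs, mul_assoc]
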